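/- For all complex numbers x₁, x₂, x₃, x₄, y₁, y₂, y₃, y₄, the following are equivalent: (i) the 8×6 matrix M₂₄ has rank at most 5, the 8×9 matrix M₃₆ has rank at most 7, and the 8×10 matrix M₄₆ has rank at most 7; (ii) rank A₁(x,y) ≤ 1 and rank A₂(x,y) ≤ 1, i.e. (x₁,…,x₄,y₁,…,y₄) ∈ Y. -/

import Mathlib

open Matrix

/-- The 4×2 matrix `A₁(x,y)` with rows `(x₁,x₂), (x₃,x₄), (y₂,y₁), (y₄,y₃)`. -/
def A1 (x₁ x₂ x₃ x₄ y₁ y₂ y₃ y₄ : ℂ) : Matrix (Fin 4) (Fin 2) ℂ :=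
  !![x₁, x₂; x₃, x₄; y₂, y₁; y₄, y₃]

/-- The 4×2 matrix `A₂(x,y)` with rows `(x₁,x₃), (x₂,x₄), (y₃,y₁), (y₄,y₂)`. -/
def A2 (x₁ x₂ x₃ x₄ y₁ y₂ y₃ y₄ : ℂ) : Matrix (Fin 4) (Fin 2) ℂ :=
  !![x₁, x₃; x₂, x₄; y₃, y₁; y₄, y₂]

/-- The Wyser–Yong matrix `M₂₄` restricted to the normal slice. -/
def M24 (x₁ x₂ x₃ x₄ y₁ y₂ y₃ y₄ : ℂ) : Matrix (Fin 8) (Fin 6) ℂ :=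
  !![1, 0, 1, 0, 0, -1;
     0, 1, 0, 1, -1, 0;
     x₂, x₁, x₂, x₁, x₁, x₂;
     x₄, x₃, x₄, x₃, x₃, x₄;
     0, 0, 1, 0, 0, 1;
     0, 0, 0, 1, 1, 0;
     0, 0, y₁, y₂, -y₂, -y₁;
     0, 0, y₃, y₄, -y₄, -y₃]

/-- The Wyser–Yong matrix `M₃₆` restricted to the normal slice. -/
def M36 (x₁ x₂ x₃ x₄ y₁ y₂ y₃ y₄ : ℂ) : Matrix (Fin 8) (Fin 9) ℂ :=
  !![1, 0, 0, 1, 0, 0, -1, 0, 0;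
     0, 1, -1, 0, 1, -1, 0, 0, 0;
     x₂, x₁, x₁, x₂, x₁, x₁, x₂, 1, 0;
     x₄, x₃, x₃, x₄, x₃, x₃, x₄, 0, 1;
     0, 0, 0, 1, 0, 0, 1, 0, 0;
     0, 0, 0, 0, 1, 1, 0, 0, 0;
     0, 0, 0, y₁, y₂, -y₂, -y₁, 0, 1;
     0, 0, 0, y₃, y₄, -y₄, -y₃, 1, 0]

/-- The Wyser–Yong matrix `M₄₆` restricted to the normal slice. -/
def M46 (x₁ x₂ x₃ x₄ y₁ y₂ y₃ y₄ : ℂ) : Matrix (Fin 8) (Fin 10) ℂ :=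
  !![1, 0, 0, -1, 1, 0, 0, -1, 0, 0;
     0, 1, -1, 0, 0, 1, -1, 0, 0, 0;
     x₂, x₁, x₁, x₂, x₂, x₁, x₁, x₂, 1, 0;
     x₄, x₃, x₃, x₄, x₄, x₃, x₃, x₄, 0, 1;
     0, 0, 0, 0, 1, 0, 0, 1, 0, 0;
     0, 0, 0, 0, 0, 1, 1, 0, 0, 0;
     0, 0, 0, 0, y₁, y₂, -y₂, -y₁, 0, 1;
     0, 0, 0, 0, y₃, y₄, -y₄, -y₃, 1, 0]

/-! Each rank condition is a statement about a kernel. The null vectors of `M₂₄` are exactly the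
vectors `(-2b, -2a, b, a, -a, -b)` with `(a, b)` a null vector of `A₁`, and the left null vectors
of `M₄₆` are exactly the vectors `(0, 0, a, b, 0, 0, -b, -a)` with `(a, b)` a null vector of `A₂`;
these are left null vectors of `M₃₆` as well. By rank–nullity, `rank M₂₄ = rank A₁ + 4`,
`rank M₄₆ = rank A₂ + 6` and `rank M₃₆ ≤ rank A₂ + 6`, so the condition on `M₃₆` is implied by the
one on `M₄₆`. -/

open Module

namespace Matrix

variable {K : Type*} [Field K] {m n l k : Type*} [Fintype n] [Fintype k]

theorem rank_add_finrank_ker (A : Matrix m n K) :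
    A.rank + finrank K (LinearMap.ker A.mulVecLin) = Fintype.card n := by
  rw [rank, LinearMap.finrank_range_add_finrank_ker, finrank_fintype_fun_eq_card]

theorem rank_add_card_le_of_map_ker_le {A : Matrix m n K} {B : Matrix l k K}
    {Q : (k → K) →ₗ[K] n → K} (hQ : Function.Injective Q)
    (h : (LinearMap.ker B.mulVecLin).map Q ≤ LinearMap.ker A.mulVecLin) :
    A.rank + Fintype.card k ≤ B.rank + Fintype.card n := by
  have hQB := (Submodule.equivMapOfInjective Q hQ (LinearMap.ker B.mulVecLin)).finrank_eq
  have hmono := Submodule.finrank_mono h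
  have hA := A.rank_add_finrank_ker
  have hB := B.rank_add_finrank_ker
  omega

theorem rank_add_card_eq_of_ker_eq_map {A : Matrix m n K} {B : Matrix l k K}
    {Q : (k → K) →ₗ[K] n → K} (hQ : Function.Injective Q)
    (h : LinearMap.ker A.mulVecLin = (LinearMap.ker B.mulVecLin).map Q) :
    A.rank + Fintype.card k = B.rank + Fintype.card n := by
  have hQB := (Submodule.equivMapOfInjective Q hQ (LinearMap.ker B.mulVecLin)).finrank_eq
  have hA := A.rank_add_finrank_ker
  have hB := B.rank_add_finrank_ker
  rw [h] at hA
  omega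

theorem mulVecLin_injective_of_mul_eq_one [DecidableEq k] {P : Matrix k n K}
    {Q : Matrix n k K} (h : P * Q = 1) : Function.Injective Q.mulVecLin :=
  Function.LeftInverse.injective (g := P.mulVecLin) fun v => by simp [mulVec_mulVec, h]

end Matrix

def liftKerA1 : Matrix (Fin 6) (Fin 2) ℂ := !![0, -2; -2, 0; 0, 1; 1, 0; -1, 0; 0, -1]

def liftKerA2 : Matrix (Fin 8) (Fin 2) ℂ := !![0, 0; 0, 0; 1, 0; 0, 1; 0, 0; 0, 0; 0, -1; -1, 0]

theorem liftKerA1_injective : Function.Injective liftKerA1.mulVecLin :=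
  mulVecLin_injective_of_mul_eq_one (P := !![0, 0, 0, 1, 0, 0; 0, 0, 1, 0, 0, 0]) <| by
    simp [liftKerA1, one_fin_two]

theorem liftKerA2_injective : Function.Injective liftKerA2.mulVecLin :=
  mulVecLin_injective_of_mul_eq_one
    (P := !![0, 0, 1, 0, 0, 0, 0, 0; 0, 0, 0, 1, 0, 0, 0, 0]) <| by
    simp [liftKerA2, one_fin_two]

section SliceMatrices

variable (x₁ x₂ x₃ x₄ y₁ y₂ y₃ y₄ : ℂ)

theorem ker_M24_eq_map_ker_A1 :
    LinearMap.ker (M24 x₁ x₂ x₃ x₄ y₁ y₂ y₃ y₄).mulVecLin =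
      (LinearMap.ker (A1 x₁ x₂ x₃ x₄ y₁ y₂ y₃ y₄).mulVecLin).map liftKerA1.mulVecLin := by
  ext w
  constructor
  · intro hw
    refine ⟨![w 3, w 2], ?_, ?_⟩ <;>
      simp only [SetLike.mem_coe, LinearMap.mem_ker, mulVecLin_apply, M24, A1, liftKerA1,
        mulVec, dotProduct, Fin.sum_univ_succ, Fin.sum_univ_zero, of_apply, cons_val,
        funext_iff, Fin.forall_fin_succ, Fin.reduceSucc, Pi.zero_apply, IsEmpty.forall_iff,
        and_true] at hw ⊢ <;>
      obtain ⟨e1, e2, e3, e4, e5, e6, e7, e8⟩ := hw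
    · exact ⟨by linear_combination (x₂ / 2) * e1 + (x₁ / 2) * e2 - e3 / 2 + x₂ * e5 + x₁ * e6,
        by linear_combination (x₄ / 2) * e1 + (x₃ / 2) * e2 - e4 / 2 + x₄ * e5 + x₃ * e6,
        by linear_combination e7 / 2 + (y₁ / 2) * e5 + (y₂ / 2) * e6,
        by linear_combination e8 / 2 + (y₃ / 2) * e5 + (y₄ / 2) * e6⟩
    · exact ⟨by linear_combination -e1 - e5, by linear_combination -e2 - e6,
        by ring, by ring, by linear_combination -e6, by linear_combination -e5⟩
  · rintro ⟨v, hv, rfl⟩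
    simp only [SetLike.mem_coe, LinearMap.mem_ker, mulVecLin_apply, M24, A1, liftKerA1,
      mulVec, dotProduct, Fin.sum_univ_succ, Fin.sum_univ_zero, of_apply, cons_val,
      funext_iff, Fin.forall_fin_succ, Fin.reduceSucc, Pi.zero_apply, IsEmpty.forall_iff,
      and_true] at hv ⊢
    obtain ⟨h1, h2, h3, h4⟩ := hv
    exact ⟨by ring, by ring, by linear_combination -2 * h1, by linear_combination -2 * h2,
      by ring, by ring, by linear_combination 2 * h3, by linear_combination 2 * h4⟩

theorem ker_M46_transpose_eq_map_ker_A2 :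
    LinearMap.ker (M46 x₁ x₂ x₃ x₄ y₁ y₂ y₃ y₄)ᵀ.mulVecLin =
      (LinearMap.ker (A2 x₁ x₂ x₃ x₄ y₁ y₂ y₃ y₄).mulVecLin).map liftKerA2.mulVecLin := by
  ext w
  constructor
  · intro hw
    refine ⟨![w 2, w 3], ?_, ?_⟩ <;>
      simp only [SetLike.mem_coe, LinearMap.mem_ker, mulVecLin_apply, M46, A2, liftKerA2,
        mulVec, dotProduct, Fin.sum_univ_succ, Fin.sum_univ_zero, transpose_apply, of_apply,
        cons_val, funext_iff, Fin.forall_fin_succ, Fin.reduceSucc, Pi.zero_apply,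
        IsEmpty.forall_iff, and_true] at hw ⊢ <;>
      obtain ⟨f1, f2, f3, f4, f5, f6, f7, f8, f9, f10⟩ := hw
    · exact ⟨by linear_combination (f2 + f3) / 2, by linear_combination (f1 + f4) / 2,
        by linear_combination (f1 - f4 - f5 + f8) / 2 + y₁ * f10 + y₃ * f9,
        by linear_combination (f2 - f3 - f6 + f7) / 2 + y₂ * f10 + y₄ * f9⟩
    · exact ⟨by linear_combination (f4 - f1) / 2, by linear_combination (f3 - f2) / 2,
        by ring, by ring, by linear_combination (f1 + f4 - f5 - f8) / 2,
        by linear_combination (f2 + f3 - f6 - f7) / 2, by linear_combination -f10,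
        by linear_combination -f9⟩
  · rintro ⟨v, hv, rfl⟩
    simp only [SetLike.mem_coe, LinearMap.mem_ker, mulVecLin_apply, M46, A2, liftKerA2,
      mulVec, dotProduct, Fin.sum_univ_succ, Fin.sum_univ_zero, transpose_apply, of_apply,
      cons_val, funext_iff, Fin.forall_fin_succ, Fin.reduceSucc, Pi.zero_apply,
      IsEmpty.forall_iff, and_true] at hv ⊢
    obtain ⟨h1, h2, h3, h4⟩ := hv
    exact ⟨by linear_combination h2, by linear_combination h1, by linear_combination h1,
      by linear_combination h2, by linear_combination h2 - h3, by linear_combination h1 - h4,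
      by linear_combination h1 + h4, by linear_combination h2 + h3, by ring, by ring⟩

theorem map_ker_A2_le_ker_M36_transpose :
    (LinearMap.ker (A2 x₁ x₂ x₃ x₄ y₁ y₂ y₃ y₄).mulVecLin).map liftKerA2.mulVecLin ≤
      LinearMap.ker (M36 x₁ x₂ x₃ x₄ y₁ y₂ y₃ y₄)ᵀ.mulVecLin := by
  rintro _ ⟨v, hv, rfl⟩
  simp only [SetLike.mem_coe, LinearMap.mem_ker, mulVecLin_apply, M36, A2, liftKerA2,
    mulVec, dotProduct, Fin.sum_univ_succ, Fin.sum_univ_zero, transpose_apply, of_apply,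
    cons_val, funext_iff, Fin.forall_fin_succ, Fin.reduceSucc, Pi.zero_apply,
    IsEmpty.forall_iff, and_true] at hv ⊢
  obtain ⟨h1, h2, h3, h4⟩ := hv
  exact ⟨by linear_combination h2, by linear_combination h1, by linear_combination h1,
    by linear_combination h2 - h3, by linear_combination h1 - h4, by linear_combination h1 + h4,
    by linear_combination h2 + h3, by ring, by ring⟩

theorem rank_M24 :
    (M24 x₁ x₂ x₃ x₄ y₁ y₂ y₃ y₄).rank = (A1 x₁ x₂ x₃ x₄ y₁ y₂ y₃ y₄).rank + 4 := by
  have h := rank_add_card_eq_of_ker_eq_map liftKerA1_injective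
    (ker_M24_eq_map_ker_A1 x₁ x₂ x₃ x₄ y₁ y₂ y₃ y₄)
  simp only [Fintype.card_fin] at h
  omega

theorem rank_M46 :
    (M46 x₁ x₂ x₃ x₄ y₁ y₂ y₃ y₄).rank = (A2 x₁ x₂ x₃ x₄ y₁ y₂ y₃ y₄).rank + 6 := by
  have h := rank_add_card_eq_of_ker_eq_map liftKerA2_injective
    (ker_M46_transpose_eq_map_ker_A2 x₁ x₂ x₃ x₄ y₁ y₂ y₃ y₄)
  simp only [Fintype.card_fin, rank_transpose] at h
  omega

theorem rank_M36_le :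
    (M36 x₁ x₂ x₃ x₄ y₁ y₂ y₃ y₄).rank ≤ (A2 x₁ x₂ x₃ x₄ y₁ y₂ y₃ y₄).rank + 6 := by
  have h := rank_add_card_le_of_map_ker_le liftKerA2_injective
    (map_ker_A2_le_ker_M36_transpose x₁ x₂ x₃ x₄ y₁ y₂ y₃ y₄)
  simp only [Fintype.card_fin, rank_transpose] at h
  omega

end SliceMatrices

theorem stmt11 (x₁ x₂ x₃ x₄ y₁ y₂ y₃ y₄ : ℂ) :
    ((M24 x₁ x₂ x₃ x₄ y₁ y₂ y₃ y₄).rank ≤ 5 ∧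
      (M36 x₁ x₂ x₃ x₄ y₁ y₂ y₃ y₄).rank ≤ 7 ∧
      (M46 x₁ x₂ x₃ x₄ y₁ y₂ y₃ y₄).rank ≤ 7) ↔
    ((A1 x₁ x₂ x₃ x₄ y₁ y₂ y₃ y₄).rank ≤ 1 ∧
      (A2 x₁ x₂ x₃ x₄ y₁ y₂ y₃ y₄).rank ≤ 1) := by
  have h24 := rank_M24 x₁ x₂ x₃ x₄ y₁ y₂ y₃ y₄
  have h36 := rank_M36_le x₁ x₂ x₃ x₄ y₁ y₂ y₃ y₄
  have h46 := rank_M46 x₁ x₂ x₃ x₄ y₁ y₂ y₃ y₄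
  omega
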